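/- Soundness of H_IPL with respect to the restricted Nmatrix R(M_IPL): for every set Γ of intuitionistic formulas and every intuitionistic formula φ, if Γ ⊢_IPL φ then every level valuation v ∈ L_IPL with v(γ)=T for all γ ∈ Γ satisfies v(φ)=T. -/
import Mathlib


/-- Intuitionistic formulas over signature Ω = {¬, →, ∨, ∧}. -/
inductive IF
  | var : ℕ → IF
  | neg : IF → IF
  | imp : IF → IF → IF
  | dis : IF → IF → IF
  | con : IF → IF → IF
deriving DecidableEq

/-- The three intuitionistic truth values F, U, T. -/
inductive VI
  | F | U | T
deriving DecidableEq

def inegOp : VI → Set VI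
  | .F => {.U, .T}
  | .U => {.U, .T}
  | .T => {.F}

def iimpOp : VI → VI → Set VI
  | .T, .T => {.T}
  | .T, _ => {.F}
  | _, .T => {.T}
  | _, _ => {.U, .T}

def idisOp : VI → VI → Set VI
  | .T, _ => {.T}
  | _, .T => {.T}
  | _, _ => {.F}

def iconOp : VI → VI → Set VI
  | .T, .T => {.T}
  | _, _ => {.F}

/-- Valuations over the Nmatrix M_IPL. -/
def IsValI (v : IF → VI) : Prop :=
  (∀ α, v (.neg α) ∈ inegOp (v α)) ∧
  (∀ α β, v (.imp α β) ∈ iimpOp (v α) (v β)) ∧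
  (∀ α β, v (.dis α β) ∈ idisOp (v α) (v β)) ∧
  (∀ α β, v (.con α β) ∈ iconOp (v α) (v β))

/-- Val₊(M_IPL): valuations taking only values T, F on propositional variables. -/
def ValPlus : Set (IF → VI) :=
  {v | IsValI v ∧ ∀ n, v (.var n) = VI.T ∨ v (.var n) = VI.F}

/-- Complexity of an intuitionistic formula. -/
def co : IF → ℕ
  | .var _ => 0
  | .neg α => co α + 1
  | .imp α β => co α + co β + 1
  | .dis α β => co α + co β + 1
  | .con α β => co α + co β + 1

/-- The levels L_k for IPL. -/
def LevelI : ℕ → Set (IF → VI)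
  | 0 => ValPlus
  | (k+1) => {v ∈ LevelI k | ∀ α, co α ≤ k + 1 → v α = VI.U →
      ∃ w ∈ LevelI k, w α = VI.F ∧ ∀ β, v β = VI.T → w β = VI.T}

/-- Intuitionistic level valuations L_IPL = ⋂_{k ≥ 0} L_k. -/
def LIPL : Set (IF → VI) := ⋂ k, LevelI k

/-- The consequence relation Γ ⊢_IPL φ of the Hilbert calculus H_IPL. -/
inductive IDeriv (Γ : Set IF) : IF → Prop
  | prem {φ : IF} : φ ∈ Γ → IDeriv Γ φ
  | ax1 (α β : IF) : IDeriv Γ (α.imp (β.imp α))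
  | ax2 (α β γ : IF) : IDeriv Γ ((α.imp (β.imp γ)).imp ((α.imp β).imp (α.imp γ)))
  | ax3 (α β : IF) : IDeriv Γ (α.imp (β.imp (α.con β)))
  | ax4 (α β : IF) : IDeriv Γ ((α.con β).imp α)
  | ax5 (α β : IF) : IDeriv Γ ((α.con β).imp β)
  | ax6 (α β : IF) : IDeriv Γ (α.imp (α.dis β))
  | ax7 (α β : IF) : IDeriv Γ (β.imp (α.dis β))
  | ax8 (α β γ : IF) : IDeriv Γ ((α.imp γ).imp ((β.imp γ).imp ((α.dis β).imp γ)))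
  | ax9 (α β : IF) : IDeriv Γ ((β.imp α).imp ((β.imp α.neg).imp β.neg))
  | ax10 (α β : IF) : IDeriv Γ (α.imp (α.neg.imp β))
  | mp {α β : IF} : IDeriv Γ (α.imp β) → IDeriv Γ α → IDeriv Γ β

/-- Δ is φ-saturated (w.r.t. ⊢_IPL). -/
def ISat (Δ : Set IF) (φ : IF) : Prop :=
  ¬ IDeriv Δ φ ∧ ∀ α ∉ Δ, IDeriv (insert α Δ) φ

open Classical in
/-- The valuation v_Δ associated to a φ-saturated set Δ in IPL. -/
noncomputable def vDeltaI (Δ : Set IF) : IF → VI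
  | .var n => if IF.var n ∈ Δ then VI.T else VI.F
  | .neg α => if IF.neg α ∈ Δ then VI.T else if α ∈ Δ then VI.F else VI.U
  | .imp α β => if IF.imp α β ∈ Δ then VI.T else if α ∈ Δ then VI.F else VI.U
  | .con α β => if α ∈ Δ ∧ β ∈ Δ then VI.T else VI.F
  | .dis α β => if α ∈ Δ ∨ β ∈ Δ then VI.T else VI.F

/-- Λ is closed under (immediate, hence all) subformulas. -/
def SubClosedI (Λ : Set IF) : Prop :=
  (∀ α, IF.neg α ∈ Λ → α ∈ Λ) ∧
  (∀ α β, IF.imp α β ∈ Λ → α ∈ Λ ∧ β ∈ Λ) ∧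
  (∀ α β, IF.dis α β ∈ Λ → α ∈ Λ ∧ β ∈ Λ) ∧
  (∀ α β, IF.con α β ∈ Λ → α ∈ Λ ∧ β ∈ Λ)

/-- Intuitionistic partial valuations with domain Λ (modelled as total functions
constrained on Λ). -/
def IsPValI (Λ : Set IF) (v : IF → VI) : Prop :=
  (∀ n, IF.var n ∈ Λ → v (.var n) = VI.T ∨ v (.var n) = VI.F) ∧
  (∀ α, IF.neg α ∈ Λ → v (.neg α) ∈ inegOp (v α)) ∧
  (∀ α β, IF.imp α β ∈ Λ → v (.imp α β) ∈ iimpOp (v α) (v β)) ∧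
  (∀ α β, IF.dis α β ∈ Λ → v (.dis α β) ∈ idisOp (v α) (v β)) ∧
  (∀ α β, IF.con α β ∈ Λ → v (.con α β) ∈ iconOp (v α) (v β))

/-- iPLV'(Λ): intuitionistic partial' level valuations over Λ. -/
def iPLV' (Λ : Set IF) : Set (IF → VI) :=
  {v | IsPValI Λ v ∧ ∀ α ∈ Λ, v α = VI.U →
    ∃ w ∈ LIPL, w α = VI.F ∧ ∀ β ∈ Λ, v β = VI.T → w β = VI.T}

/-- iPLV(Λ): intuitionistic partial level valuations over Λ, defined as the largest
subset of iPV(Λ) whose condition is witnessed inside itself. -/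
def iPLV (Λ : Set IF) : Set (IF → VI) :=
  ⋃₀ {S | (∀ v ∈ S, IsPValI Λ v) ∧
      ∀ v ∈ S, ∀ α ∈ Λ, v α = VI.U →
        ∃ w ∈ S, w α = VI.F ∧ ∀ β ∈ Λ, v β = VI.T → w β = VI.T}

/-- Set of subformulas of an intuitionistic formula. -/
def IF.subf : IF → Finset IF
  | .var n => {.var n}
  | .neg α => insert (.neg α) α.subf
  | .imp α β => insert (.imp α β) (α.subf ∪ β.subf)
  | .dis α β => insert (.dis α β) (α.subf ∪ β.subf)
  | .con α β => insert (.con α β) (α.subf ∪ β.subf)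

/-- Γ ⊨_iPLV φ : consequence w.r.t. the intuitionistic truth tables, over the set Λ
of subformulas of Γ ∪ {φ}. -/
def iPLVConseq (Γ : Finset IF) (φ : IF) : Prop :=
  ∀ v ∈ iPLV (↑(Γ.biUnion IF.subf ∪ φ.subf) : Set IF),
    (∀ β ∈ Γ, v β = VI.T) → v φ = VI.T

section IplSoundnessAux

open VI

lemma level_succ_mem_iff {v : IF → VI} {k : ℕ} :
    v ∈ LevelI (k+1) ↔ v ∈ LevelI k ∧ ∀ α, co α ≤ k + 1 → v α = VI.U →
      ∃ w ∈ LevelI k, w α = VI.F ∧ ∀ β, v β = VI.T → w β = VI.T := Iff.rfl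

lemma level_antitone {v : IF → VI} {m k : ℕ} (h : m ≤ k) (hv : v ∈ LevelI k) :
    v ∈ LevelI m := by
  induction k with
  | zero => simpa [Nat.le_zero.mp h] using hv
  | succ k ih =>
    rcases Nat.lt_or_ge m (k+1) with h' | h'
    · exact ih (Nat.lt_succ_iff.mp h') (level_succ_mem_iff.mp hv).1
    · have : m = k + 1 := le_antisymm h h'
      simpa [this] using hv

lemma isval_of_level {v : IF → VI} {k : ℕ} (hv : v ∈ LevelI k) : IsValI v := by
  have h0 : v ∈ LevelI 0 := level_antitone (Nat.zero_le k) hv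
  exact h0.1

lemma descend {v : IF → VI} {k : ℕ} {α : IF} (hv : v ∈ LevelI (k+1))
    (hc : co α ≤ k + 1) (hU : v α = VI.U) :
    ∃ w ∈ LevelI k, w α = VI.F ∧ ∀ β, v β = VI.T → w β = VI.T :=
  (level_succ_mem_iff.mp hv).2 α hc hU

variable {v : IF → VI} {α β γ : IF}

lemma imp_F (h : IsValI v) (hf : v (.imp α β) = VI.F) : v α = VI.T ∧ v β ≠ VI.T := by
  have := h.2.1 α β
  rw [hf] at this
  cases hα : v α <;> cases hβ : v β <;> simp_all [iimpOp]

lemma imp_TT (h : IsValI v) (ht : v (.imp α β) = VI.T) (ha : v α = VI.T) : v β = VI.T := by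
  have := h.2.1 α β
  rw [ht, ha] at this
  cases hβ : v β <;> simp_all [iimpOp]

lemma imp_of_codT (h : IsValI v) (hb : v β = VI.T) : v (.imp α β) = VI.T := by
  have := h.2.1 α β
  rw [hb] at this
  cases hα : v α <;> simp_all [iimpOp]

lemma neg_F (h : IsValI v) (hf : v (.neg α) = VI.F) : v α = VI.T := by
  have := h.1 α
  rw [hf] at this
  cases hα : v α <;> simp_all [inegOp]

lemma neg_of_T (h : IsValI v) (ha : v α = VI.T) : v (.neg α) = VI.F := by
  have := h.1 α
  rw [ha] at this
  simpa [inegOp] using this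

lemma con_T (h : IsValI v) (ht : v (.con α β) = VI.T) : v α = VI.T ∧ v β = VI.T := by
  have := h.2.2.2 α β
  rw [ht] at this
  cases hα : v α <;> cases hβ : v β <;> simp_all [iconOp]

lemma con_of_TT (h : IsValI v) (ha : v α = VI.T) (hb : v β = VI.T) : v (.con α β) = VI.T := by
  have := h.2.2.2 α β
  rw [ha, hb] at this
  simpa [iconOp] using this

lemma dis_T (h : IsValI v) (ht : v (.dis α β) = VI.T) : v α = VI.T ∨ v β = VI.T := by
  have := h.2.2.1 α β
  rw [ht] at this
  cases hα : v α <;> cases hβ : v β <;> simp_all [idisOp]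

lemma dis_of_left (h : IsValI v) (ha : v α = VI.T) : v (.dis α β) = VI.T := by
  have := h.2.2.1 α β
  rw [ha] at this
  simpa [idisOp] using this

lemma dis_of_right (h : IsValI v) (hb : v β = VI.T) : v (.dis α β) = VI.T := by
  have := h.2.2.1 α β
  rw [hb] at this
  cases hα : v α <;> simp_all [idisOp]

end IplSoundnessAux

section IplSoundnessAx

variable {v : IF → VI} {k : ℕ} {α β γ : IF}

lemma ax_T (hv : v ∈ LIPL) (φ : IF)
    (hnf : ∀ (w : IF → VI) (k : ℕ), w ∈ LevelI k → co φ ≤ k → w φ ≠ VI.F) :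
    v φ = VI.T := by
  have hvk : ∀ k, v ∈ LevelI k := fun k => Set.mem_iInter.mp hv k
  cases h : v φ with
  | F => exact absurd h (hnf v (co φ) (hvk _) le_rfl)
  | U =>
    obtain ⟨w, hw, hwF, _⟩ := descend (hvk (co φ + 1)) (Nat.le_succ _) h
    exact absurd hwF (hnf w (co φ) hw le_rfl)
  | T => rfl

lemma nf_ax1 (hv : v ∈ LevelI k) (hk : co (α.imp (β.imp α)) ≤ k)
    (hF : v (α.imp (β.imp α)) = VI.F) : False := by
  have hval := isval_of_level hv
  obtain ⟨ha, hne⟩ := imp_F hval hF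
  exact hne (imp_of_codT hval ha)

lemma ax2_core (h : IsValI v) (h1 : v (α.imp (β.imp γ)) = VI.T)
    (h2 : v (α.imp β) = VI.T) (h3 : v (α.imp γ) = VI.F) : False := by
  obtain ⟨ha, hgne⟩ := imp_F h h3
  exact hgne (imp_TT h (imp_TT h h1 ha) (imp_TT h h2 ha))

lemma ax2_step (hv : v ∈ LevelI k) (hk : co (α.imp γ) + 1 ≤ k)
    (h1 : v (α.imp (β.imp γ)) = VI.T) (hRF : v ((α.imp β).imp (α.imp γ)) = VI.F) :
    False := by
  have hval := isval_of_level hv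
  obtain ⟨h2, hne⟩ := imp_F hval hRF
  cases h3 : v (α.imp γ) with
  | T => exact hne h3
  | F => exact ax2_core hval h1 h2 h3
  | U =>
    obtain ⟨w, hw, hwF, hwT⟩ := descend (level_antitone hk hv) (Nat.le_succ _) h3
    exact ax2_core (isval_of_level hw) (hwT _ h1) (hwT _ h2) hwF

lemma nf_ax2 (hv : v ∈ LevelI k)
    (hk : co ((α.imp (β.imp γ)).imp ((α.imp β).imp (α.imp γ))) ≤ k)
    (hF : v ((α.imp (β.imp γ)).imp ((α.imp β).imp (α.imp γ))) = VI.F) : False := by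
  have hval := isval_of_level hv
  obtain ⟨h1, hne⟩ := imp_F hval hF
  cases hR : v ((α.imp β).imp (α.imp γ)) with
  | T => exact hne hR
  | F => exact ax2_step hv (by simp [co] at hk ⊢ <;> omega) h1 hR
  | U =>
    obtain ⟨w, hw, hwF, hwT⟩ :=
      descend (level_antitone (show co ((α.imp β).imp (α.imp γ)) + 1 ≤ k by
        simp [co] at hk ⊢ <;> omega) hv) (Nat.le_succ _) hR
    exact ax2_step hw (by simp [co] <;> omega) (hwT _ h1) hwF

lemma ax3_core (h : IsValI v) (ha : v α = VI.T)
    (hF : v (β.imp (α.con β)) = VI.F) : False := by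
  obtain ⟨hb, hne⟩ := imp_F h hF
  exact hne (con_of_TT h ha hb)

lemma nf_ax3 (hv : v ∈ LevelI k) (hk : co (α.imp (β.imp (α.con β))) ≤ k)
    (hF : v (α.imp (β.imp (α.con β))) = VI.F) : False := by
  have hval := isval_of_level hv
  obtain ⟨ha, hne⟩ := imp_F hval hF
  cases hR : v (β.imp (α.con β)) with
  | T => exact hne hR
  | F => exact ax3_core hval ha hR
  | U =>
    obtain ⟨w, hw, hwF, hwT⟩ :=
      descend (level_antitone (show co (β.imp (α.con β)) + 1 ≤ k by
        simp [co] at hk ⊢ <;> omega) hv) (Nat.le_succ _) hR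
    exact ax3_core (isval_of_level hw) (hwT _ ha) hwF

lemma nf_ax4 (hv : v ∈ LevelI k) (hF : v ((α.con β).imp α) = VI.F) : False := by
  have hval := isval_of_level hv
  obtain ⟨hc, hne⟩ := imp_F hval hF
  exact hne (con_T hval hc).1

lemma nf_ax5 (hv : v ∈ LevelI k) (hF : v ((α.con β).imp β) = VI.F) : False := by
  have hval := isval_of_level hv
  obtain ⟨hc, hne⟩ := imp_F hval hF
  exact hne (con_T hval hc).2

lemma nf_ax6 (hv : v ∈ LevelI k) (hF : v (α.imp (α.dis β)) = VI.F) : False := by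
  have hval := isval_of_level hv
  obtain ⟨ha, hne⟩ := imp_F hval hF
  exact hne (dis_of_left hval ha)

lemma nf_ax7 (hv : v ∈ LevelI k) (hF : v (β.imp (α.dis β)) = VI.F) : False := by
  have hval := isval_of_level hv
  obtain ⟨hb, hne⟩ := imp_F hval hF
  exact hne (dis_of_right hval hb)

lemma ax8_core (h : IsValI v) (h1 : v (α.imp γ) = VI.T) (h2 : v (β.imp γ) = VI.T)
    (hF : v ((α.dis β).imp γ) = VI.F) : False := by
  obtain ⟨hd, hne⟩ := imp_F h hF
  rcases dis_T h hd with ha | hb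
  · exact hne (imp_TT h h1 ha)
  · exact hne (imp_TT h h2 hb)

lemma ax8_step (hv : v ∈ LevelI k) (hk : co ((α.dis β).imp γ) + 1 ≤ k)
    (h1 : v (α.imp γ) = VI.T)
    (hRF : v ((β.imp γ).imp ((α.dis β).imp γ)) = VI.F) : False := by
  have hval := isval_of_level hv
  obtain ⟨h2, hne⟩ := imp_F hval hRF
  cases hS : v ((α.dis β).imp γ) with
  | T => exact hne hS
  | F => exact ax8_core hval h1 h2 hS
  | U =>
    obtain ⟨w, hw, hwF, hwT⟩ := descend (level_antitone hk hv) (Nat.le_succ _) hS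
    exact ax8_core (isval_of_level hw) (hwT _ h1) (hwT _ h2) hwF

lemma nf_ax8 (hv : v ∈ LevelI k)
    (hk : co ((α.imp γ).imp ((β.imp γ).imp ((α.dis β).imp γ))) ≤ k)
    (hF : v ((α.imp γ).imp ((β.imp γ).imp ((α.dis β).imp γ))) = VI.F) : False := by
  have hval := isval_of_level hv
  obtain ⟨h1, hne⟩ := imp_F hval hF
  cases hR : v ((β.imp γ).imp ((α.dis β).imp γ)) with
  | T => exact hne hR
  | F => exact ax8_step hv (by simp [co] at hk ⊢ <;> omega) h1 hR
  | U =>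
    obtain ⟨w, hw, hwF, hwT⟩ :=
      descend (level_antitone (show co ((β.imp γ).imp ((α.dis β).imp γ)) + 1 ≤ k by
        simp [co] at hk ⊢ <;> omega) hv) (Nat.le_succ _) hR
    exact ax8_step hw (by simp [co] <;> omega) (hwT _ h1) hwF

lemma ax9_core (h : IsValI v) (h1 : v (β.imp α) = VI.T)
    (h2 : v (β.imp α.neg) = VI.T) (hF : v β.neg = VI.F) : False := by
  have hb := neg_F h hF
  have hna := imp_TT h h2 hb
  have := neg_of_T h (imp_TT h h1 hb)
  simp_all

lemma ax9_step (hv : v ∈ LevelI k) (hk : co β.neg + 1 ≤ k)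
    (h1 : v (β.imp α) = VI.T)
    (hRF : v ((β.imp α.neg).imp β.neg) = VI.F) : False := by
  have hval := isval_of_level hv
  obtain ⟨h2, hne⟩ := imp_F hval hRF
  cases hS : v β.neg with
  | T => exact hne hS
  | F => exact ax9_core hval h1 h2 hS
  | U =>
    obtain ⟨w, hw, hwF, hwT⟩ := descend (level_antitone hk hv) (Nat.le_succ _) hS
    exact ax9_core (isval_of_level hw) (hwT _ h1) (hwT _ h2) hwF

lemma nf_ax9 (hv : v ∈ LevelI k)
    (hk : co ((β.imp α).imp ((β.imp α.neg).imp β.neg)) ≤ k)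
    (hF : v ((β.imp α).imp ((β.imp α.neg).imp β.neg)) = VI.F) : False := by
  have hval := isval_of_level hv
  obtain ⟨h1, hne⟩ := imp_F hval hF
  cases hR : v ((β.imp α.neg).imp β.neg) with
  | T => exact hne hR
  | F => exact ax9_step hv (by simp [co] at hk ⊢ <;> omega) h1 hR
  | U =>
    obtain ⟨w, hw, hwF, hwT⟩ :=
      descend (level_antitone (show co ((β.imp α.neg).imp β.neg) + 1 ≤ k by
        simp [co] at hk ⊢ <;> omega) hv) (Nat.le_succ _) hR
    exact ax9_step hw (by simp [co] <;> omega) (hwT _ h1) hwF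

lemma ax10_core (h : IsValI v) (ha : v α = VI.T)
    (hF : v (α.neg.imp β) = VI.F) : False := by
  obtain ⟨hna, _⟩ := imp_F h hF
  have := neg_of_T h ha
  simp_all

lemma nf_ax10 (hv : v ∈ LevelI k) (hk : co (α.imp (α.neg.imp β)) ≤ k)
    (hF : v (α.imp (α.neg.imp β)) = VI.F) : False := by
  have hval := isval_of_level hv
  obtain ⟨ha, hne⟩ := imp_F hval hF
  cases hR : v (α.neg.imp β) with
  | T => exact hne hR
  | F => exact ax10_core hval ha hR
  | U =>
    obtain ⟨w, hw, hwF, hwT⟩ :=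
      descend (level_antitone (show co (α.neg.imp β) + 1 ≤ k by
        simp [co] at hk ⊢ <;> omega) hv) (Nat.le_succ _) hR
    exact ax10_core (isval_of_level hw) (hwT _ ha) hwF

end IplSoundnessAx


/-- Soundness of H_IPL w.r.t. R(M_IPL). -/
theorem ipl_soundness (Γ : Set IF) (φ : IF) (h : IDeriv Γ φ) :
    ∀ v ∈ LIPL, (∀ γ ∈ Γ, v γ = VI.T) → v φ = VI.T := by

  intro v hv hΓ
  induction h with
  | prem hφ => exact hΓ _ hφ
  | ax1 α β => exact ax_T hv _ fun w k hw hk => nf_ax1 hw hk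
  | ax2 α β γ => exact ax_T hv _ fun w k hw hk => nf_ax2 hw hk
  | ax3 α β => exact ax_T hv _ fun w k hw hk => nf_ax3 hw hk
  | ax4 α β => exact ax_T hv _ fun w k hw _ => nf_ax4 hw
  | ax5 α β => exact ax_T hv _ fun w k hw _ => nf_ax5 hw
  | ax6 α β => exact ax_T hv _ fun w k hw _ => nf_ax6 hw
  | ax7 α β => exact ax_T hv _ fun w k hw _ => nf_ax7 hw
  | ax8 α β γ => exact ax_T hv _ fun w k hw hk => nf_ax8 hw hk
  | ax9 α β => exact ax_T hv _ fun w k hw hk => nf_ax9 hw hk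
  | ax10 α β => exact ax_T hv _ fun w k hw hk => nf_ax10 hw hk
  | mp h1 h2 ih1 ih2 =>
    exact imp_TT (isval_of_level (Set.mem_iInter.mp hv 0)) ih1 ih2
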